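/- arXiv:2002.02204 — 2 statements merged into one kernel-verified Lean document; each statement's English description precedes it below -/
import Mathlib

section
/- Let α : X → A and β : A → B be functors with β injective on objects, let C be a category, and let F : X → C be a functor. Suppose that for every functor G : A → C with G ∘ α = F there is a functor H_G : B → C, functorial in G (over the category of such G's and natural transformations between them commuting with the restriction to X), together with a natural isomorphism H_G ∘ β ≅ G natural in G. Then the restriction functor β_F^α from the category of functors B → C restricting along β∘α to F, to the category of functors A → C restricting along α to F, admits a right inverse functor (i.e., a functor s with β_F^α ∘ s = identity). -/
open CategoryTheory

section Fib

variable {X A B C : Type*} [Category X] [Category A] [Category B] [Category C]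

/-- The fibre category `A^α_F C`: functors `G : A ⥤ C` with `α ⋙ G = F`,
with morphisms the natural transformations whose whiskering by `α` is the
identity on `F` (expressed via `eqToHom`). -/
def Fib (α : X ⥤ A) (F : X ⥤ C) : Type _ :=
  { G : A ⥤ C // α ⋙ G = F }

instance (α : X ⥤ A) (F : X ⥤ C) : Category (Fib α F) where
  Hom P Q := { m : P.1 ⟶ Q.1 // Functor.whiskerLeft α m = eqToHom (P.2.trans Q.2.symm) }
  id P := ⟨𝟙 P.1, by simp⟩
  comp f g := ⟨f.1 ≫ g.1, by rw [Functor.whiskerLeft_comp, f.2, g.2, eqToHom_trans]⟩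
  id_comp f := Subtype.ext (by simp)
  comp_id f := Subtype.ext (by simp)
  assoc f g h := Subtype.ext (by simp)

/-- The forgetful functor from the fibre category to the functor category. -/
def fibForget (α : X ⥤ A) (F : X ⥤ C) : Fib α F ⥤ (A ⥤ C) where
  obj P := P.1
  map m := m.1

/-- The restriction functor `β_F^α : B^{βα}_F C ⥤ A^α_F C`, precomposition with `β`. -/
def restrictFib (α : X ⥤ A) (β : A ⥤ B) (F : X ⥤ C) :
    Fib (α ⋙ β) F ⥤ Fib α F where
  obj H := ⟨β ⋙ H.1, by rw [← Functor.assoc]; exact H.2⟩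
  map m := ⟨Functor.whiskerLeft β m.1, by rw [Functor.whiskerLeft_twice, m.2]; ext x; simp⟩
  map_id H := Subtype.ext (by
    show Functor.whiskerLeft β (𝟙 H.1) = 𝟙 (β ⋙ H.1); simp)
  map_comp m m' := Subtype.ext (by
    show Functor.whiskerLeft β (m.1 ≫ m'.1) = Functor.whiskerLeft β m.1 ≫ Functor.whiskerLeft β m'.1; simp)

end Fib

/-!
Restriction along a functor `β` that is injective on objects is an isofibration: given
`e : β ⋙ H ≅ G`, redefine `H` on each object `β a` to be `G a` and conjugate its action on
morphisms by the components of `e` (`Functor.copyObj`); injectivity makes the new object function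
well defined. Doing this for every `H = Hfun.obj G` at once rectifies `Hfun` to a functor `K` with
`K ⋙ (restriction along β)` equal to the forgetful functor on the nose, and such a `K` factors
through the fibre `Fib (α ⋙ β) F`.
-/

namespace CategoryTheory

def Functor.IsIsofibration {E D : Type*} [Category E] [Category D] (P : E ⥤ D) : Prop :=
  ∀ (x : E) (y : D) (e : P.obj x ≅ y),
    ∃ (x' : E) (φ : x ≅ x') (h : P.obj x' = y), P.map φ.hom = e.hom ≫ eqToHom h.symm

theorem Functor.IsIsofibration.exists_comp_eq {J E D : Type*} [Category J] [Category E]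
    [Category D] {P : E ⥤ D} (hP : P.IsIsofibration) (K : J ⥤ E) (L : J ⥤ D)
    (e : K ⋙ P ≅ L) : ∃ K' : J ⥤ E, K' ⋙ P = L := by
  choose x' φ hx' hφ using fun j => hP (K.obj j) (L.obj j) (e.app j)
  have hinv_comp (j : J) : e.inv.app j ≫ P.map (φ j).hom = eqToHom (hx' j).symm := by
    simp [hφ]
  exact ⟨K.copyObj x' φ, (Functor.ext_of_iso
    (e.symm ≪≫ Functor.isoWhiskerRight (K.isoCopyObj x' φ) P) (fun j => (hx' j).symm)
    hinv_comp).symm⟩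

section Restriction

variable {A B C : Type*} [Category A] [Category B] [Category C]

lemma exists_iso_eq_of_injective_obj {β : A ⥤ B} (hβ : Function.Injective β.obj) {H : B ⥤ C}
    {G : A ⥤ C} (e : β ⋙ H ≅ G) (b : B) :
    ∃ (c : C) (φ : H.obj b ≅ c), ∀ a (hab : β.obj a = b),
      ∃ hc : G.obj a = c,
        eqToHom (congrArg H.obj hab) ≫ φ.hom = e.hom.app a ≫ eqToHom hc := by
  by_cases hb : ∃ a, β.obj a = b
  · obtain ⟨a, rfl⟩ := hb
    refine ⟨G.obj a, e.app a, fun a' hab => ?_⟩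
    obtain rfl := hβ hab
    exact ⟨rfl, by simp⟩
  · exact ⟨H.obj b, Iso.refl _, fun a hab => (hb ⟨a, hab⟩).elim⟩

theorem isIsofibration_whiskeringLeft_obj {β : A ⥤ B} (hβ : Function.Injective β.obj) :
    ((Functor.whiskeringLeft A B C).obj β).IsIsofibration := by
  intro H G (e : β ⋙ H ≅ G)
  choose c φ hφ using exists_iso_eq_of_injective_obj hβ e
  have hobj (a : A) : G.obj a = c (β.obj a) := (hφ (β.obj a) a rfl).1
  have happ (a : A) : (φ (β.obj a)).hom = e.hom.app a ≫ eqToHom (hobj a) := by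
    simpa using (hφ (β.obj a) a rfl).2
  have hinv_comp (a : A) : e.inv.app a ≫ (φ (β.obj a)).hom = eqToHom (hobj a) := by
    simp [happ]
  have hrestrict : β ⋙ H.copyObj c φ = G :=
    (Functor.ext_of_iso (e.symm ≪≫ Functor.isoWhiskerLeft β (H.isoCopyObj c φ)) hobj
      hinv_comp).symm
  refine ⟨H.copyObj c φ, H.isoCopyObj c φ, hrestrict, ?_⟩
  ext a
  rw [NatTrans.comp_app, eqToHom_app]
  exact happ a

end Restriction

end CategoryTheory

open CategoryTheory

namespace Fib

variable {J X A C : Type*} [Category J] [Category X] [Category A] [Category C]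
  {α : X ⥤ A} {F : X ⥤ C}

lemma ext {P Q : Fib α F} (h : P.1 = Q.1) : P = Q := Subtype.ext h

instance : (fibForget α F).Faithful := ⟨Subtype.ext⟩

lemma functor_ext {S T : J ⥤ Fib α F} (h : S ⋙ fibForget α F = T ⋙ fibForget α F) :
    S = T :=
  CategoryTheory.Functor.ext (fun j => ext (Functor.congr_obj h j)) fun _ _ f =>
    (fibForget α F).map_injective <| by
      rw [Functor.map_comp, Functor.map_comp, eqToHom_map, eqToHom_map]
      exact Functor.congr_hom h f

lemma fibForget_comp_whiskeringLeft :
    fibForget α F ⋙ (Functor.whiskeringLeft X A C).obj α = (Functor.const (Fib α F)).obj F :=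
  CategoryTheory.Functor.ext (fun P => P.2) fun _ _ m => by
    -- `Fib` is a plain `def`, so `P.2` only typechecks after unfolding it: `rw` cannot match here.
    erw [Functor.const_obj_map, Category.id_comp, eqToHom_trans]
    exact m.2

def lift (K : J ⥤ (A ⥤ C))
    (hK : K ⋙ (Functor.whiskeringLeft X A C).obj α = (Functor.const J).obj F) :
    J ⥤ Fib α F where
  obj j := ⟨K.obj j, Functor.congr_obj hK j⟩
  map f := ⟨K.map f, by simpa using Functor.congr_hom hK f⟩
  map_id j := Subtype.ext (K.map_id j)
  map_comp f g := Subtype.ext (K.map_comp f g)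

end Fib

/-- Lemma (LemA): if every `G` in the fibre `A^α_F C` admits an extension `H_G : B ⥤ C`,
functorially in `G`, together with a natural isomorphism `β ⋙ H_G ≅ G` natural in `G`,
then the restriction functor `β_F^α` admits a (strict) right inverse functor. -/
theorem statement1 {X A B C : Type*} [Category X] [Category A] [Category B] [Category C]
    (α : X ⥤ A) (β : A ⥤ B) (hβ : Function.Injective β.obj) (F : X ⥤ C)
    (Hfun : Fib α F ⥤ (B ⥤ C))
    (i : Hfun ⋙ (Functor.whiskeringLeft A B C).obj β ≅ fibForget α F) :
    ∃ s : Fib α F ⥤ Fib (α ⋙ β) F, s ⋙ restrictFib α β F = 𝟭 (Fib α F) := by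
  obtain ⟨K, hK⟩ :=
    (isIsofibration_whiskeringLeft_obj hβ).exists_comp_eq Hfun (fibForget α F) i
  have hKF : K ⋙ (Functor.whiskeringLeft X B C).obj (α ⋙ β) = (Functor.const _).obj F := by
    rw [Functor.whiskeringLeft_obj_comp, ← Functor.assoc, hK, Fib.fibForget_comp_whiskeringLeft]
  exact ⟨Fib.lift K hKF, Fib.functor_ext hK⟩
end

section
/- Let L : C → D and R : D → C be functors, η : 1_C ⟹ R ∘ L and ε : L ∘ R ⟹ 1_D natural transformations satisfying the first triangular identity (ε whiskered on the left of L, composed with L whiskered on the left of η, equals the identity on L). If η is a natural isomorphism and (L ∘ R) whiskered with ε equals ε whiskered with (L ∘ R) (i.e., L R ε = ε L R as natural transformations L R L R ⟹ L R), then the second triangular identity also holds: (R ∘ ε) composed with (η ∘ R) equals the identity on R, so (L, R, η, ε) is an adjunction L ⊣ R. -/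
open CategoryTheory

/-- Given `η : 1 ⟹ R ∘ L` and `ε : L ⋙ R ⟶ 1` satisfying the first triangle identity,
with `η` an isomorphism and `LRε = εLR`, the second triangle identity holds and
`(L, R, η, ε)` is an adjunction. -/
theorem statement6 {C D : Type*} [Category C] [Category D]
    (L : C ⥤ D) (R : D ⥤ C)
    (η : 𝟭 C ⟶ L ⋙ R) (ε : R ⋙ L ⟶ 𝟭 D)
    (hT1 : ∀ c : C, L.map (η.app c) ≫ ε.app (L.obj c) = 𝟙 (L.obj c))
    (hη : IsIso η)
    (hcomm : ∀ d : D, L.map (R.map (ε.app d)) = ε.app (L.obj (R.obj d))) :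
    (∀ d : D, η.app (R.obj d) ≫ R.map (ε.app d) = 𝟙 (R.obj d)) ∧ Nonempty (L ⊣ R) := by
  have hT2 : ∀ d : D, η.app (R.obj d) ≫ R.map (ε.app d) = 𝟙 (R.obj d) := by
    intro d
    have happ : IsIso (η.app (R.obj d)) := inferInstance
    -- naturality of η at R.map (ε.app d)
    have hnat := η.naturality (R.map (ε.app d))
    simp only [Functor.id_map, Functor.comp_map, Functor.id_obj, Functor.comp_obj] at hnat
    rw [hcomm] at hnat
    -- R.map of the first triangle identity at R.obj d
    have hRT : R.map (L.map (η.app (R.obj d))) ≫ R.map (ε.app (L.obj (R.obj d)))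
        = 𝟙 (R.obj (L.obj (R.obj d))) := by
      rw [← R.map_comp, hT1]; simp
    -- naturality of η at η.app (R.obj d) gives η_{RLRd} = RL(η_{Rd})
    have hnat2 := η.naturality (η.app (R.obj d))
    simp only [Functor.id_map, Functor.comp_map, Functor.id_obj, Functor.comp_obj] at hnat2
    have hcancel : η.app (R.obj (L.obj (R.obj d)))
        = R.map (L.map (η.app (R.obj d))) := by
      exact (cancel_epi (η.app (R.obj d))).mp hnat2
    have hleft : R.map (ε.app d) ≫ η.app (R.obj d) = 𝟙 _ := by
      rw [hnat, hcancel, hRT]; rfl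
    -- η.app is iso, so a left inverse is the inverse
    calc η.app (R.obj d) ≫ R.map (ε.app d)
        = η.app (R.obj d) ≫ R.map (ε.app d) ≫
            (η.app (R.obj d) ≫ inv (η.app (R.obj d))) := by simp
      _ = η.app (R.obj d) ≫ (R.map (ε.app d) ≫ η.app (R.obj d)) ≫
            inv (η.app (R.obj d)) := by simp only [Category.assoc]
      _ = 𝟙 _ := by rw [hleft]; simp
  refine ⟨hT2, ⟨Adjunction.mkOfUnitCounit ⟨η, ε, ?_, ?_⟩⟩⟩
  · ext c
    simpa using hT1 c
  · ext d
    simpa using hT2 d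
end
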